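/- For any semantics S that satisfies the Epistemic Splitting Property, the epistemic logic program Π₀ consisting of the rules { a | b. ; ⊥ ← not K a. } has no S-world views. -/
import Mathlib


/- # A formalization of Epistemic Logic Programs (ELPs)

Atoms are drawn from an arbitrary type `α`.
An objective literal is an atom `a` or a default-negated atom `not a`.
A body literal is an objective literal, a subjective literal `K a`,
or a negated subjective literal `not K a`.
A rule has a head (a set of atoms, read disjunctively; the empty head is `⊥`,
i.e. the rule is a constraint) and a body (a set of body literals).
A program is a set of rules. -/

inductive OLit (α : Type) : Type where
  | pos : α → OLit α
  | neg : α → OLit α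

inductive BLit (α : Type) : Type where
  | obj : OLit α → BLit α
  | k   : α → BLit α
  | nk  : α → BLit α

structure Rule (α : Type) : Type where
  head : Set α
  body : Set (BLit α)

abbrev Program (α : Type) : Type := Set (Rule α)

variable {α : Type}

def BLit.atom : BLit α → α
  | .obj (.pos a) => a
  | .obj (.neg a) => a
  | .k a => a
  | .nk a => a

def BLit.isObj : BLit α → Prop
  | .obj _ => True
  | _ => False

def Rule.posBody (r : Rule α) : Set α := {a | BLit.obj (OLit.pos a) ∈ r.body}
def Rule.negBody (r : Rule α) : Set α := {a | BLit.obj (OLit.neg a) ∈ r.body}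
def Rule.bodyObjAtoms (r : Rule α) : Set α := r.posBody ∪ r.negBody
def Rule.bodySubjAtoms (r : Rule α) : Set α :=
  {a | BLit.k a ∈ r.body ∨ BLit.nk a ∈ r.body}
def Rule.atoms (r : Rule α) : Set α := r.head ∪ BLit.atom '' r.body
def Rule.Objective (r : Rule α) : Prop := ∀ l ∈ r.body, l.isObj
def Rule.Subjective (r : Rule α) : Prop := ∀ l ∈ r.body, ¬ l.isObj

def Program.atoms (P : Program α) : Set α := ⋃ r ∈ P, Rule.atoms r
def Program.objAtoms (P : Program α) : Set α := ⋃ r ∈ P, (r.head ∪ r.bodyObjAtoms)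
def Program.Objective (P : Program α) : Prop := ∀ r ∈ P, r.Objective

/-- `W ⊨ K a` : `a` belongs to every member of `W`. -/
def KSat (W : Set (Set α)) (a : α) : Prop := ∀ I ∈ W, a ∈ I

def satOLit (I : Set α) : OLit α → Prop
  | .pos a => a ∈ I
  | .neg a => a ∉ I

def satBLit (W : Set (Set α)) (I : Set α) : BLit α → Prop
  | .obj l => satOLit I l
  | .k a => KSat W a
  | .nk a => ¬ KSat W a

/-- A positive rule, given as (head, positive body), is classically satisfied by `J`. -/
def ModelsPosRule (J : Set α) (hb : Set α × Set α) : Prop :=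
  hb.2 ⊆ J → (hb.1 ∩ J).Nonempty

/-- The Gelfond–Lifschitz reduct `P^I` of an (objective) program:
remove every rule whose body contains some `not a` with `a ∈ I`,
and delete all negative literals from the remaining rules;
the reduct is represented as a set of positive rules (head, positive body). -/
def GLReduct (P : Program α) (I : Set α) : Set (Set α × Set α) :=
  {hb | ∃ r ∈ P, (∀ a ∈ r.negBody, a ∉ I) ∧ hb = (r.head, r.posBody)}

def ModelsReduct (J : Set α) (R : Set (Set α × Set α)) : Prop :=
  ∀ hb ∈ R, ModelsPosRule J hb

/-- `I` is an answer set (stable model) of `P` iff `I` is a minimal model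
(w.r.t. `⊆`) of the Gelfond–Lifschitz reduct `P^I`. -/
def StableModel (P : Program α) (I : Set α) : Prop :=
  ModelsReduct I (GLReduct P I) ∧ ∀ J ⊆ I, ModelsReduct J (GLReduct P I) → J = I

/-- Body of a rule after taking the K15-reduct w.r.t. `W`:
objective literals are kept; `K a` (in a kept rule, i.e. with `W ⊨ K a`)
is replaced by `a`; in `not K a`, the inner `K a` is replaced by `⊥`
(so the literal becomes `⊤` and disappears) when `W ⊭ K a`,
and by `a` (so the literal becomes `not a`) when `W ⊨ K a`. -/
def K15ReductBody (W : Set (Set α)) (b : Set (BLit α)) : Set (BLit α) :=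
  {l | (∃ ol, BLit.obj ol ∈ b ∧ l = BLit.obj ol)
     ∨ (∃ a, BLit.k a ∈ b ∧ l = BLit.obj (OLit.pos a))
     ∨ (∃ a, BLit.nk a ∈ b ∧ KSat W a ∧ l = BLit.obj (OLit.neg a))}

/-- The K15-reduct of `P` w.r.t. `W`: every subjective literal `K a` with
`W ⊭ K a` is replaced by `⊥` (hence a rule with such a literal positively in
its body can never fire and is removed), and all remaining occurrences of
`K a` are replaced by `a`. -/
def K15Reduct (P : Program α) (W : Set (Set α)) : Program α :=
  {r' | ∃ r ∈ P, (∀ a, BLit.k a ∈ r.body → KSat W a) ∧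
        r'.head = r.head ∧ r'.body = K15ReductBody W r.body}

/-- A non-empty `W` is a K15-world view of `P` iff `W` equals the set of all
stable models of the K15-reduct of `P` w.r.t. `W`. -/
def K15WorldView (P : Program α) (W : Set (Set α)) : Prop :=
  W.Nonempty ∧ W = {I | StableModel (K15Reduct P W) I}

/-- Epistemic stratification (Cabalar et al., Def. 6). -/
def EpistemicallyStratified (P : Program α) : Prop :=
  ∃ lam : α → ℤ,
    (∀ r ∈ P, ∀ a ∈ Rule.atoms r \ Rule.bodySubjAtoms r,
        ∀ b ∈ Rule.atoms r \ Rule.bodySubjAtoms r, lam a = lam b) ∧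
    (∀ r ∈ P, ∀ a ∈ r.head ∪ r.bodyObjAtoms, ∀ b ∈ Rule.bodySubjAtoms r, lam b < lam a)

/- ## Semantics for ELPs -/

/-- A semantics maps each ELP (over any atom type) to a set of world views,
each world view being a set of sets of atoms. -/
abbrev SemMap : Type 1 := (β : Type) → Program β → Set (Set (Set β))

/-- A semantics: every world view is non-empty, and on objective programs it
returns the singleton consisting of the set of stable models when the program
has stable models, and no world view otherwise. -/
def IsSemantics (S : SemMap) : Prop :=
  (∀ (β : Type) (P : Program β), ∀ W ∈ S β P, W.Nonempty) ∧
  (∀ (β : Type) (P : Program β), Program.Objective P →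
      S β P = {W | W = {I | StableModel P I} ∧ W.Nonempty})

/- ## Epistemic splitting -/

def IsEpistemicSplittingSet (U : Set α) (P : Program α) : Prop :=
  ∀ r ∈ P, Rule.atoms r ⊆ U ∨ (r.head ∪ r.bodyObjAtoms) ∩ U = ∅

/-- `⟨B, T⟩` is an epistemic splitting of `P` w.r.t. the epistemic splitting
set `U`; by convention, subjective rules satisfying the top condition and all
subjective constraints are placed in the top `T`. -/
def IsEpistemicSplitting (U : Set α) (P B T : Program α) : Prop :=
  B ∪ T = P ∧ B ∩ T = ∅ ∧
  (∀ r ∈ B, Rule.atoms r ⊆ U) ∧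
  (∀ r ∈ T, (r.head ∪ r.bodyObjAtoms) ∩ U = ∅) ∧
  (∀ r ∈ P, r.Subjective → (r.head ∪ r.bodyObjAtoms) ∩ U = ∅ → r ∈ T) ∧
  (∀ r ∈ P, r.head = ∅ → (∃ l ∈ r.body, ¬ l.isObj) → r ∈ T)

/-- The subjective reduct `E_U(Π,W)` of the top `T` w.r.t. `W` and signature
`U`: each subjective literal whose atom lies in `U` is replaced by `⊤` if `W`
satisfies it (the literal is deleted) and by `⊥` otherwise (the rule is
deleted). -/
def EUReduct (T : Program α) (U : Set α) (W : Set (Set α)) : Program α :=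
  {r' | ∃ r ∈ T,
     (∀ a ∈ U, BLit.k a ∈ r.body → KSat W a) ∧
     (∀ a ∈ U, BLit.nk a ∈ r.body → ¬ KSat W a) ∧
     r'.head = r.head ∧
     r'.body = {l | l ∈ r.body ∧ (l.isObj ∨ l.atom ∉ U)}}

/-- The WBT operation `W_b ⊔ W_t`. -/
def wbt (Wb Wt : Set (Set α)) : Set (Set α) :=
  {I | ∃ Ib ∈ Wb, ∃ It ∈ Wt, I = Ib ∪ It}

/-- `⟨Wb, Wt⟩` is an `S`-solution of the program split into `⟨B,T⟩` w.r.t. `U`. -/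
def SSolution (S : SemMap) (U : Set α) (B T : Program α)
    (Wb Wt : Set (Set α)) : Prop :=
  Wb ∈ S α B ∧ Wt ∈ S α (EUReduct T U Wb)

/-- The Epistemic Splitting Property (ESP). -/
def SatisfiesESP (S : SemMap) : Prop :=
  ∀ (β : Type) (P B T : Program β) (U : Set β), IsEpistemicSplitting U P B T →
    ∀ W, W ∈ S β P ↔ ∃ Wb Wt, SSolution S U B T Wb Wt ∧ W = wbt Wb Wt

/- ## The detached version of the top -/

/-- Atom type of the detached version: `Sum.inl a` is an original atom `a`;
`Sum.inr (true, a)` is the fresh atom `kl_a` and `Sum.inr (false, a)` is the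
fresh atom `nkl_a` (the set of fresh atoms is `f_U(Π)`). -/
abbrev DAt (α : Type) : Type := α ⊕ (Bool × α)

/-- Atoms of the subjective literals in `F_U(Π)`: those occurring in a
subjective literal of the top `T` whose atom occurs in the bottom `B` but not
(objectively) in `T`. -/
def FUAtoms (B T : Program α) : Set α :=
  {a | (∃ r ∈ T, BLit.k a ∈ r.body ∨ BLit.nk a ∈ r.body) ∧
       a ∈ Program.atoms B ∧ a ∉ Program.objAtoms T}

/-- Detached body: each `K a` with `a ∈ F` is replaced by the fresh atom
`kl_a`, each `not K a` with `a ∈ F` by the fresh atom `nkl_a`; all other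
literals are kept (renamed via `Sum.inl`). -/
def detachBody (F : Set α) (b : Set (BLit α)) : Set (BLit (DAt α)) :=
  {l | (∃ a, BLit.obj (OLit.pos a) ∈ b ∧ l = BLit.obj (OLit.pos (Sum.inl a)))
     ∨ (∃ a, BLit.obj (OLit.neg a) ∈ b ∧ l = BLit.obj (OLit.neg (Sum.inl a)))
     ∨ (∃ a, BLit.k a ∈ b ∧ a ∉ F ∧ l = BLit.k (Sum.inl a))
     ∨ (∃ a, BLit.nk a ∈ b ∧ a ∉ F ∧ l = BLit.nk (Sum.inl a))
     ∨ (∃ a, BLit.k a ∈ b ∧ a ∈ F ∧ l = BLit.obj (OLit.pos (Sum.inr (true, a))))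
     ∨ (∃ a, BLit.nk a ∈ b ∧ a ∈ F ∧ l = BLit.obj (OLit.pos (Sum.inr (false, a))))}

/-- The detached version `T'_U(Π)` of the top: the detached rules of `T`,
plus the disjunctive facts `kl_a | nkl_a` for each `a ∈ F_U(Π)`. -/
def Detached (B T : Program α) : Program (DAt α) :=
  {r' | ∃ r ∈ T, r'.head = Sum.inl '' r.head ∧
        r'.body = detachBody (FUAtoms B T) r.body} ∪
  {r' | ∃ a ∈ FUAtoms B T,
        r'.head = {Sum.inr (true, a), Sum.inr (false, a)} ∧ r'.body = ∅}

/-- One step of the splitting process on world views of the detached version: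
pick `a ∈ F` such that some member contains `kl_a` and some member contains
`nkl_a`, and keep either the members containing `kl_a` or those containing
`nkl_a`. -/
def SplitStep (F : Set α) (V V' : Set (Set (DAt α))) : Prop :=
  ∃ a ∈ F,
    (∃ I ∈ V, Sum.inr (true, a) ∈ I) ∧ (∃ I ∈ V, Sum.inr (false, a) ∈ I) ∧
    (V' = {I ∈ V | Sum.inr (true, a) ∈ I} ∨ V' = {I ∈ V | Sum.inr (false, a) ∈ I})

/-- The splitting process terminates: no world view contains both `kl_a` and
`nkl_a` for any `a ∈ F`. -/
def SplitTerminal (F : Set α) (V : Set (Set (DAt α))) : Prop :=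
  ∀ a ∈ F, ¬ ((∃ I ∈ V, Sum.inr (true, a) ∈ I) ∧ (∃ I ∈ V, Sum.inr (false, a) ∈ I))

/-- Interface World Views of the detached version `T'_U(Π)` under `S`:
obtained from an `S`-world view of the detached version by repeatedly
splitting until no further split is possible. -/
def InterfaceWV (S : SemMap) (B T : Program α) (V : Set (Set (DAt α))) : Prop :=
  ∃ W ∈ S (DAt α) (Detached B T),
    Relation.ReflTransGen (SplitStep (FUAtoms B T)) W V ∧
    SplitTerminal (FUAtoms B T) V

/-- The map `W' ↦ {X \ f_U(Π) | X ∈ W'}` (removal of the fresh atoms,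
reading the remaining atoms back in the original signature). -/
def projWV (V : Set (Set (DAt α))) : Set (Set α) :=
  {I | ∃ X ∈ V, I = Sum.inl ⁻¹' X}

/- ## Requisite, constraint and requirement sets; candidate world views -/

/-- The epistemic top-down requisite set `ES` determined by an interface
world view `V`: `K a` if `kl_a` belongs to every member of `V`, and
`not K a` otherwise (for `a ∈ F`). -/
def RequisiteSet (F : Set α) (V : Set (Set (DAt α))) : Set (BLit α) :=
  {l | ∃ a ∈ F, (l = BLit.k a ∧ ∀ I ∈ V, Sum.inr (true, a) ∈ I)
             ∨ (l = BLit.nk a ∧ ¬ ∀ I ∈ V, Sum.inr (true, a) ∈ I)}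

/-- The subjective literals (over `F`) whose detached forms occur in some
constraint of the detached top. -/
def ConstraintLits (T : Program α) (F : Set α) : Set (BLit α) :=
  {l | ∃ a ∈ F, ∃ r ∈ T, r.head = ∅ ∧
        ((l = BLit.k a ∧ BLit.k a ∈ r.body) ∨ (l = BLit.nk a ∧ BLit.nk a ∈ r.body))}

/-- The epistemic top-down constraint set `EC`. -/
def ECSet (T : Program α) (F : Set α) (V : Set (Set (DAt α))) : Set (BLit α) :=
  RequisiteSet F V ∩ ConstraintLits T F

/-- The requirement set `RQ`. -/
def RQSet (T : Program α) (F : Set α) (V : Set (Set (DAt α))) : Set (BLit α) :=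
  RequisiteSet F V \ ConstraintLits T F

/-- `W` fulfills a set `E` of subjective literals. -/
def Fulfills (W : Set (Set α)) (E : Set (BLit α)) : Prop :=
  (∀ a, BLit.k a ∈ E → KSat W a) ∧ (∀ a, BLit.nk a ∈ E → ¬ KSat W a)

/-- Candidate world view, basic version: `W = W_B ⊔ W_T` where `W_T` is a
world view of the top (given by an interface world view `V`) and `W_B` is a
world view of the bottom fulfilling the whole requisite set of `W_T`. -/
def BasicCandidateWV (S : SemMap) (B T : Program α) (W : Set (Set α)) : Prop :=
  ∃ V, InterfaceWV S B T V ∧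
    ∃ Wb ∈ S α B,
      Fulfills Wb (RequisiteSet (FUAtoms B T) V) ∧
      W = wbt Wb (projWV V)

/-- Basic Top-down Epistemic Splitting Property (TDESPB). -/
def SatisfiesTDESPB (S : SemMap) : Prop :=
  ∀ (β : Type) (P B T : Program β) (U : Set β), IsEpistemicSplitting U P B T →
    ∀ W, BasicCandidateWV S B T W → W ∈ S β P

/-- Top-down influence: the `W_T`-tailored bottom, obtained by replacing in
`B` each subjective literal belonging to `EC` by its objective counterpart. -/
def TailoredBottom (B : Program α) (EC : Set (BLit α)) : Program α :=
  {r' | ∃ r ∈ B, r'.head = r.head ∧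
     r'.body = {l | (l ∈ r.body ∧ l ∉ EC)
       ∨ (∃ a, BLit.k a ∈ r.body ∧ BLit.k a ∈ EC ∧ l = BLit.obj (OLit.pos a))
       ∨ (∃ a, BLit.nk a ∈ r.body ∧ BLit.nk a ∈ EC ∧ l = BLit.obj (OLit.neg a))}}

/-- Candidate world view, extended version: `W = W_B ⊔ W_T` where `W_T` is a
world view of the top (via an interface world view `V`) and `W_B` is a
(non-empty) subset of a world view of the tailored bottom that fulfills `EC`
(being the entire world view when `EC` is empty) and fulfills `RQ`. -/
def CandidateWV (S : SemMap) (B T : Program α) (W : Set (Set α)) : Prop :=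
  ∃ V, InterfaceWV S B T V ∧
    ∃ Wfull ∈ S α (TailoredBottom B (ECSet T (FUAtoms B T) V)),
      ∃ Wb ⊆ Wfull, Wb.Nonempty ∧
        (ECSet T (FUAtoms B T) V = ∅ → Wb = Wfull) ∧
        Fulfills Wb (ECSet T (FUAtoms B T) V) ∧
        Fulfills Wb (RQSet T (FUAtoms B T) V) ∧
        W = wbt Wb (projWV V)

/-- Top-down Epistemic Splitting Property (TDESP). -/
def SatisfiesTDESP (S : SemMap) : Prop :=
  ∀ (β : Type) (P B T : Program β) (U : Set β), IsEpistemicSplitting U P B T →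
    ∀ W, CandidateWV S B T W → W ∈ S β P

/- ## Foundedness -/

/-- `X` is a non-empty unfounded set w.r.t. `P` and `⟨W, I⟩`. -/
def UnfoundedSet (P : Program α) (W : Set (Set α)) (I : Set α) (X : Set α) : Prop :=
  X.Nonempty ∧ ∀ A ∈ X, ¬ ∃ r ∈ P, A ∈ r.head ∧
    (∀ l ∈ r.body, satBLit W I l) ∧
    r.posBody ∩ X = ∅ ∧
    (∀ a ∈ X, BLit.k a ∉ r.body) ∧
    r.head ∩ I = {A}

def SatisfiesFoundedness (S : SemMap) : Prop :=
  ∀ (β : Type) (P : Program β), ∀ W ∈ S β P, ∀ I ∈ W, ∀ X ⊆ I, ¬ UnfoundedSet P W I X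

/-- The K15 semantics as a world-view mapping. -/
def K15Sem : SemMap := fun _ P => {W | K15WorldView P W}

inductive At : Type where
  | a | b

/-- The program Π₀ = { a | b. ; ⊥ ← not K a. } -/
def Pi0 : Program At :=
  { ⟨{At.a, At.b}, ∅⟩,
    ⟨∅, {BLit.nk At.a}⟩ }

def Pi0r1 : Rule At := ⟨{At.a, At.b}, ∅⟩
def Pi0r2 : Rule At := ⟨∅, {BLit.nk At.a}⟩
def Pi0B : Program At := {Pi0r1}
def Pi0T : Program At := {Pi0r2}

lemma pi0r1_ne_r2 : Pi0r1 ≠ Pi0r2 := by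
  intro h
  have := congrArg Rule.head h
  simp only [Pi0r1, Pi0r2] at this
  have ha : At.a ∈ ({At.a, At.b} : Set At) := by simp
  rw [this] at ha
  exact ha

lemma pi0_split : IsEpistemicSplitting (Set.univ) Pi0 Pi0B Pi0T := by
  refine ⟨?_, ?_, ?_, ?_, ?_, ?_⟩
  · ext r; simp only [Pi0B, Pi0T, Pi0, Pi0r1, Pi0r2, Set.mem_union,
      Set.mem_singleton_iff, Set.mem_insert_iff]
  · ext r
    simp only [Set.mem_inter_iff, Pi0B, Pi0T, Set.mem_singleton_iff,
      Set.mem_empty_iff_false, iff_false, not_and]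
    rintro rfl h
    exact pi0r1_ne_r2 h
  · intro r _; exact Set.subset_univ _
  · intro r hr
    simp only [Pi0T, Set.mem_singleton_iff] at hr
    subst hr
    ext x
    simp [Pi0r2, Rule.bodyObjAtoms, Rule.posBody, Rule.negBody]
  · intro r hr _ hcond
    simp only [Pi0, Set.mem_insert_iff, Set.mem_singleton_iff] at hr
    rcases hr with rfl | rfl
    · exfalso
      have : At.a ∈ (Rule.head ⟨{At.a, At.b}, ∅⟩ ∪
          Rule.bodyObjAtoms ⟨{At.a, At.b}, ∅⟩) ∩ Set.univ := by simp
      rw [hcond] at this; exact this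
    · simp [Pi0T, Pi0r2]
  · intro r hr hhead _
    simp only [Pi0, Set.mem_insert_iff, Set.mem_singleton_iff] at hr
    rcases hr with rfl | rfl
    · exfalso
      have : At.a ∈ (Rule.head ⟨{At.a, At.b}, ∅⟩) := by simp
      rw [hhead] at this; exact this
    · simp [Pi0T, Pi0r2]

lemma pi0B_stable_b : StableModel Pi0B {At.b} := by
  constructor
  · rintro hb ⟨r, hr, -, rfl⟩
    simp only [Pi0B, Set.mem_singleton_iff] at hr
    subst hr
    intro _
    exact ⟨At.b, by simp [Pi0r1]⟩
  · intro J hJ hmod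
    have hmem : ((Pi0r1.head, Pi0r1.posBody)) ∈ GLReduct Pi0B {At.b} := by
      exact ⟨Pi0r1, rfl, by simp [Pi0r1, Rule.negBody], rfl⟩
    have hpos : Pi0r1.posBody ⊆ J := by
      intro x hx; simp [Pi0r1, Rule.posBody] at hx
    obtain ⟨x, hx1, hx2⟩ := hmod _ hmem hpos
    have hxb : x = At.b := by
      have := hJ hx2; simpa using this
    subst hxb
    exact Set.Subset.antisymm hJ (by simpa using hx2)

/-- for any semantics `S` satisfying the Epistemic Splitting
Property, the program Π₀ = { a | b. ; ⊥ ← not K a. } has no `S`-world views. -/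
theorem pi0_no_world_views_under_esp (S : SemMap) (hS : IsSemantics S)
    (hesp : SatisfiesESP S) :
    S At Pi0 = ∅ := by
  ext W
  simp only [Set.mem_empty_iff_false, iff_false]
  intro hW
  obtain ⟨Wb, Wt, ⟨hWb, hWt⟩, -⟩ := (hesp At Pi0 Pi0B Pi0T Set.univ pi0_split W).1 hW
  -- Pi0B is objective, so Wb is its set of stable models
  have hBobj : Program.Objective Pi0B := by
    intro r hr l hl
    simp only [Pi0B, Set.mem_singleton_iff] at hr
    subst hr
    simp [Pi0r1] at hl
  rw [hS.2 At Pi0B hBobj] at hWb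
  have hWb_eq : Wb = {I | StableModel Pi0B I} := hWb.1
  have hnk : ¬ KSat Wb At.a := by
    intro h
    have hb : ({At.b} : Set At) ∈ Wb := by rw [hWb_eq]; exact pi0B_stable_b
    have := h _ hb
    simp at this
  -- the constraint survives into the subjective reduct of the top
  have hcon : (⟨∅, ∅⟩ : Rule At) ∈ EUReduct Pi0T Set.univ Wb := by
    refine ⟨Pi0r2, rfl, ?_, ?_, rfl, ?_⟩
    · intro a _ ha; simp [Pi0r2] at ha
    · intro a _ ha
      simp only [Pi0r2, Set.mem_singleton_iff, BLit.nk.injEq] at ha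
      subst ha; exact hnk
    · ext l
      simp only [Set.mem_empty_iff_false, Set.mem_setOf_eq, Pi0r2,
        Set.mem_singleton_iff, false_iff, not_and]
      rintro rfl
      simp [BLit.isObj]
  -- the reduct is objective and has no stable models
  have hEobj : Program.Objective (EUReduct Pi0T Set.univ Wb) := by
    rintro r' ⟨r, -, -, -, -, hbody⟩ l hl
    rw [hbody] at hl
    rcases hl.2 with h | h
    · exact h
    · exact absurd (Set.mem_univ _) h
  rw [hS.2 At _ hEobj] at hWt
  obtain ⟨I, hI⟩ := hWt.2
  have hIst : StableModel (EUReduct Pi0T Set.univ Wb) I := by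
    have := hWt.1 ▸ hI; exact this
  have hglr : ((Rule.head (⟨∅, ∅⟩ : Rule At), Rule.posBody (⟨∅, ∅⟩ : Rule At)))
      ∈ GLReduct (EUReduct Pi0T Set.univ Wb) I := by
    exact ⟨⟨∅, ∅⟩, hcon, by intro a ha; simp [Rule.negBody] at ha, rfl⟩
  have := hIst.1 _ hglr (by intro a ha; simp [Rule.posBody] at ha)
  simp [Rule.head] at this
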